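/- arXiv:1802.09936 — 2 statements merged into one kernel-verified Lean document; each statement's English description precedes it below -/
import Mathlib

section
/- Let 0 < l < π/2, let g ∈ C([0,l]) with g ≥ 0 on [0,l], and let G ∈ C²([0,l]) satisfy G'' + 4G = g with G(0) = G(l) = 0. Then G ≤ 0 on [0,l] (and consequently G'' ≥ g on [0,l]). -/
/-!
Since `l < π / 2`, the function `w θ = cos (2θ - l)` is positive on `[0, l]` and solves
`w'' + 4w = 0`. If `G` were positive somewhere, let `M > 0` be the maximum of `G / w`, attained
at `θₘ`. Then `v = G - M w` is nonpositive, vanishes at `θₘ`, and `v'' = G'' + 4G - 4v ≥ 0`,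
so `v` is convex; but `v(0) = v(l) = -M cos l < 0`, contradicting `v(θₘ) = 0`.
-/

open MeasureTheory Metric Set Filter Topology

noncomputable section

open Real

lemma cos_two_mul_sub_pos {l θ : ℝ} (hl : l < π / 2) (hθ : θ ∈ Icc 0 l) :
    0 < cos (2 * θ - l) :=
  cos_pos_of_mem_Ioo ⟨by linarith [hθ.1, hθ.2], by linarith [hθ.2]⟩

lemma hasDerivAt_cos_two_mul_sub (l x : ℝ) :
    HasDerivAt (fun θ => cos (2 * θ - l)) (-2 * sin (2 * x - l)) x := by
  simpa [mul_comm] using (((hasDerivAt_id x).const_mul 2).sub_const l).cos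

lemma hasDerivAt_sin_two_mul_sub (l x : ℝ) :
    HasDerivAt (fun θ => sin (2 * θ - l)) (2 * cos (2 * x - l)) x := by
  simpa [mul_comm] using (((hasDerivAt_id x).const_mul 2).sub_const l).sin

lemma convexOn_Icc_of_hasDerivAt2_nonneg {a b : ℝ} {f f' f'' : ℝ → ℝ}
    (hf : ContinuousOn f (Icc a b)) (hf' : ∀ x ∈ Ioo a b, HasDerivAt f (f' x) x)
    (hf'' : ∀ x ∈ Ioo a b, HasDerivAt f' (f'' x) x) (hf''₀ : ∀ x ∈ Ioo a b, 0 ≤ f'' x) :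
    ConvexOn ℝ (Icc a b) f :=
  convexOn_of_hasDerivWithinAt2_nonneg (convex_Icc a b) hf
    (fun x hx => (hf' x (by simpa using hx)).hasDerivWithinAt)
    (fun x hx => (hf'' x (by simpa using hx)).hasDerivWithinAt)
    (fun x hx => hf''₀ x (by simpa using hx))

lemma ContDiffOn.hasDerivAt_derivWithin_Icc {a b x : ℝ} {f : ℝ → ℝ}
    (hf : ContDiffOn ℝ 1 f (Icc a b)) (hx : x ∈ Ioo a b) :
    HasDerivAt f (derivWithin f (Icc a b) x) x := by
  have hnhds : Icc a b ∈ 𝓝 x := Icc_mem_nhds hx.1 hx.2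
  rw [derivWithin_of_mem_nhds hnhds]
  exact ((hf.differentiableOn one_ne_zero) x (Ioo_subset_Icc_self hx)
    |>.differentiableAt hnhds).hasDerivAt

lemma ContDiffOn.hasDerivAt_derivWithin_derivWithin_Icc {a b x : ℝ} {f : ℝ → ℝ}
    (hf : ContDiffOn ℝ 2 f (Icc a b)) (hx : x ∈ Ioo a b) :
    HasDerivAt (derivWithin f (Icc a b))
      (derivWithin (derivWithin f (Icc a b)) (Icc a b) x) x :=
  (hf.derivWithin (uniqueDiffOn_Icc (hx.1.trans hx.2)) (by norm_num)).hasDerivAt_derivWithin_Icc hx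

theorem nonpos_of_deriv2_add_four_mul_nonneg {l : ℝ} (hl : l < π / 2) {G G' G'' : ℝ → ℝ}
    (hG : ContinuousOn G (Icc 0 l)) (hG' : ∀ x ∈ Ioo 0 l, HasDerivAt G (G' x) x)
    (hG'' : ∀ x ∈ Ioo 0 l, HasDerivAt G' (G'' x) x)
    (hsuper : ∀ x ∈ Ioo 0 l, 0 ≤ G'' x + 4 * G x) (hG0 : G 0 = 0) (hGl : G l = 0) :
    ∀ θ ∈ Icc 0 l, G θ ≤ 0 := by
  by_contra! ⟨θ₀, hθ₀, hGθ₀⟩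
  have hw : ∀ θ ∈ Icc 0 l, 0 < cos (2 * θ - l) := fun θ hθ => cos_two_mul_sub_pos hl hθ
  obtain ⟨θₘ, hθₘ, hmax⟩ := isCompact_Icc.exists_isMaxOn ⟨θ₀, hθ₀⟩
    (hG.div (by fun_prop) fun θ hθ => (hw θ hθ).ne')
  set M := G θₘ / cos (2 * θₘ - l)
  have hM : 0 < M := (div_pos hGθ₀ (hw θ₀ hθ₀)).trans_le (hmax hθ₀)
  set v : ℝ → ℝ := fun θ => G θ - M * cos (2 * θ - l)
  have hv : ∀ θ ∈ Icc 0 l, v θ ≤ 0 := fun θ hθ => by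
    have : G θ / cos (2 * θ - l) ≤ M := hmax hθ
    rw [div_le_iff₀ (hw θ hθ)] at this
    simp only [v]; linarith
  have hvθₘ : v θₘ = 0 := by
    simp only [v, M]; rw [div_mul_cancel₀ _ (hw θₘ hθₘ).ne', sub_self]
  have hconv : ConvexOn ℝ (Icc 0 l) v := by
    refine convexOn_Icc_of_hasDerivAt2_nonneg (f' := fun x => G' x + 2 * M * sin (2 * x - l))
      (f'' := fun x => G'' x + 4 * M * cos (2 * x - l))
      (hG.sub (by fun_prop)) (fun x hx => ?_) (fun x hx => ?_) (fun x hx => ?_)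
    · exact ((hG' x hx).sub ((hasDerivAt_cos_two_mul_sub l x).const_mul M)).congr_deriv (by ring)
    · exact ((hG'' x hx).add ((hasDerivAt_sin_two_mul_sub l x).const_mul (2 * M))).congr_deriv
        (by ring)
    · have := hv x (Ioo_subset_Icc_self hx)
      simp only [v] at this
      linarith [hsuper x hx]
  have hl_nonneg : 0 ≤ l := hθ₀.1.trans hθ₀.2
  have hendpoints : v 0 = -(M * cos l) ∧ v l = -(M * cos l) := by
    constructor <;> simp [v, hG0, hGl, two_mul]
  have := hconv.le_on_segment (left_mem_Icc.2 hl_nonneg) (right_mem_Icc.2 hl_nonneg)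
    (segment_eq_Icc hl_nonneg ▸ hθₘ)
  rw [hvθₘ, hendpoints.1, hendpoints.2, max_self] at this
  linarith [mul_pos hM (cos_pos_of_mem_Ioo ⟨by linarith, hl⟩)]

theorem stmt_11_general (l : ℝ) (hl : l < Real.pi / 2)
    (g G : ℝ → ℝ)
    (hgpos : ∀ θ ∈ Icc (0:ℝ) l, 0 ≤ g θ)
    (hG : ContDiffOn ℝ 2 G (Icc 0 l))
    (hode : ∀ θ ∈ Icc (0:ℝ) l,
      derivWithin (fun θ' => derivWithin G (Icc (0:ℝ) l) θ') (Icc (0:ℝ) l) θ + 4 * G θ = g θ)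
    (hG0 : G 0 = 0) (hGl : G l = 0) :
    ∀ θ ∈ Icc (0:ℝ) l, G θ ≤ 0 ∧
      g θ ≤ derivWithin (fun θ' => derivWithin G (Icc (0:ℝ) l) θ') (Icc (0:ℝ) l) θ := by
  have hnonpos : ∀ θ ∈ Icc (0:ℝ) l, G θ ≤ 0 :=
    nonpos_of_deriv2_add_four_mul_nonneg hl hG.continuousOn
      (fun x hx => (hG.of_le (by norm_num)).hasDerivAt_derivWithin_Icc hx)
      (fun x hx => hG.hasDerivAt_derivWithin_derivWithin_Icc hx)
      (fun x hx => (hode x (Ioo_subset_Icc_self hx)).symm ▸ hgpos x (Ioo_subset_Icc_self hx))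
      hG0 hGl
  intro θ hθ
  exact ⟨hnonpos θ hθ, by linarith [hode θ hθ, hnonpos θ hθ]⟩

/-- maximum principle for `G'' + 4G = g` on `[0,l]`, `l < π/2`.
If `g ∈ C([0,l])` is nonnegative and `G ∈ C²([0,l])` satisfies `G'' + 4G = g` with
`G(0) = G(l) = 0`, then `G ≤ 0` on `[0,l]` and consequently `G'' ≥ g` on `[0,l]`. -/
theorem stmt_11 (l : ℝ) (hl0 : 0 < l) (hl : l < Real.pi / 2)
    (g G : ℝ → ℝ)
    (hg : ContinuousOn g (Icc 0 l))
    (hgpos : ∀ θ ∈ Icc (0:ℝ) l, 0 ≤ g θ)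
    (hG : ContDiffOn ℝ 2 G (Icc 0 l))
    (hode : ∀ θ ∈ Icc (0:ℝ) l,
      derivWithin (fun θ' => derivWithin G (Icc (0:ℝ) l) θ') (Icc (0:ℝ) l) θ + 4 * G θ = g θ)
    (hG0 : G 0 = 0) (hGl : G l = 0) :
    ∀ θ ∈ Icc (0:ℝ) l, G θ ≤ 0 ∧
      g θ ≤ derivWithin (fun θ' => derivWithin G (Icc (0:ℝ) l) θ') (Icc (0:ℝ) l) θ :=
  stmt_11_general l hl g G hgpos hG hode hG0 hGl

end
end

section
/- Let c > 0. There do not exist continuously differentiable functions x, y : [0,∞) → ℝ satisfying x(0) ≥ 0, y(0) > 0, and for all t ≥ 0, x'(t) ≥ c·y(t) and y'(t) ≥ c·x(t)·y(t). Equivalently, any pair of C¹ functions satisfying these differential inequalities on a maximal interval [0,T) must have T < ∞ and become unbounded as t → T. -/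
/-!
Along the flow `y` stays positive and `x` increases, so `W = x y` satisfies
`W' ≥ c (y² + x² y) ≥ c W ^ (4/3)`. Then `W ^ (-1/3)` is positive but decreases at rate at
least `c / 3`, which is impossible on an infinite time interval.
-/

open Set Topology

lemma ContDiffOn.hasDerivAt_derivWithin {𝕜 F : Type*} [NontriviallyNormedField 𝕜]
    [NormedAddCommGroup F] [NormedSpace 𝕜 F] {f : 𝕜 → F} {s : Set 𝕜} {t : 𝕜}
    {n : WithTop ℕ∞} (hf : ContDiffOn 𝕜 n f s) (hn : n ≠ 0) (hs : s ∈ 𝓝 t) :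
    HasDerivAt f (derivWithin f s t) t := by
  rw [derivWithin_of_mem_nhds hs]
  exact ((hf.differentiableOn hn).differentiableAt hs).hasDerivAt

lemma mul_rpow_four_thirds_le {a b : ℝ} (ha : 0 ≤ a) (hb : 0 ≤ b) :
    (a * b) ^ (4 / 3 : ℝ) ≤ b ^ 2 + a ^ 2 * b := by
  have hpow : (a * b) ^ 4 ≤ (b ^ 2 + a ^ 2 * b) ^ 3 := by
    have hdiff : (b ^ 2 + a ^ 2 * b) ^ 3 - (a * b) ^ 4
        = b ^ 3 * (b ^ 3 + 3 * b ^ 2 * a ^ 2 + 2 * b * a ^ 4 + a ^ 6) := by ring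
    rw [← sub_nonneg, hdiff]
    positivity
  calc (a * b) ^ (4 / 3 : ℝ) = ((a * b) ^ 4) ^ ((3 : ℕ)⁻¹ : ℝ) := by
        rw [← Real.rpow_natCast, ← Real.rpow_mul (by positivity)]; norm_num
    _ ≤ ((b ^ 2 + a ^ 2 * b) ^ 3) ^ ((3 : ℕ)⁻¹ : ℝ) := by gcongr
    _ = b ^ 2 + a ^ 2 * b := Real.pow_rpow_inv_natCast (by positivity) (by norm_num)

theorem false_of_mul_rpow_le_deriv {W W' : ℝ → ℝ} {a k p : ℝ} (hk : 0 < k) (hp : 1 < p)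
    (hW : ContinuousOn W (Ici a)) (hW' : ∀ t ∈ Ioi a, HasDerivAt W (W' t) t)
    (hpos : ∀ t ∈ Ici a, 0 < W t) (hle : ∀ t ∈ Ioi a, k * W t ^ p ≤ W' t) : False := by
  set V : ℝ → ℝ := fun t ↦ W t ^ (1 - p) - (1 - p) * k * t
  have hV : AntitoneOn V (Ici a) := by
    refine antitoneOn_of_hasDerivWithinAt_nonpos (convex_Ici a)
      (f' := fun t ↦ W' t * (1 - p) * W t ^ (1 - p - 1) - (1 - p) * k)
      ((hW.rpow_const fun t ht ↦ Or.inl (hpos t ht).ne').sub (by fun_prop))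
      (fun t ht ↦ ?_) (fun t ht ↦ ?_)
    · rw [interior_Ici] at ht
      exact (((hW' t ht).rpow_const (Or.inl (hpos t (Ioi_subset_Ici_self ht)).ne')).sub
        ((hasDerivAt_id t).const_mul _ |>.congr_deriv (mul_one _))).hasDerivWithinAt
    · rw [interior_Ici] at ht
      have hWp : 0 < W t ^ p := Real.rpow_pos_of_pos (hpos t (Ioi_subset_Ici_self ht)) p
      have hk_le : k ≤ W' t * (W t ^ p)⁻¹ := by
        rw [← div_eq_mul_inv, le_div_iff₀ hWp]; exact hle t ht
      rw [show 1 - p - 1 = -p by ring, Real.rpow_neg (hpos t (Ioi_subset_Ici_self ht)).le]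
      nlinarith
  -- `T` is where the linear upper bound `W a ^ (1 - p) + (1 - p) k (t - a)` of `W ^ (1 - p)`
  -- reaches `0`.
  set T := a + W a ^ (1 - p) / ((p - 1) * k)
  have haT : a ≤ T := le_add_of_nonneg_right (by have := hpos a self_mem_Ici; positivity)
  have hVT := hV self_mem_Ici haT haT
  have hT : (1 - p) * k * (T - a) = - W a ^ (1 - p) := by
    have : p - 1 ≠ 0 := (sub_pos.2 hp).ne'
    simp only [T]; field_simp; ring
  have := Real.rpow_pos_of_pos (hpos T haT) (1 - p)
  simp only [V] at hVT
  linarith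

/-- `(x, y)` is a supersolution on `[0, ∞)` of the system `x' = c y`, `y' = c x y`, with
`x'`, `y'` the derivatives of `x`, `y` on `(0, ∞)`. -/
structure IsSupersolution (c : ℝ) (x y x' y' : ℝ → ℝ) : Prop where
  continuousOn_x : ContinuousOn x (Ici 0)
  continuousOn_y : ContinuousOn y (Ici 0)
  hasDerivAt_x : ∀ t ∈ Ioi (0 : ℝ), HasDerivAt x (x' t) t
  hasDerivAt_y : ∀ t ∈ Ioi (0 : ℝ), HasDerivAt y (y' t) t
  mul_le_deriv_x : ∀ t ∈ Ioi (0 : ℝ), c * y t ≤ x' t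
  mul_le_deriv_y : ∀ t ∈ Ioi (0 : ℝ), c * x t * y t ≤ y' t

namespace IsSupersolution

variable {c : ℝ} {x y x' y' : ℝ → ℝ}

/-- First-exit argument: before `y` first vanishes, `x` increases, hence `x ≥ 0` and `y`
increases too. -/
lemma pos_y (h : IsSupersolution c x y x' y') (hc : 0 < c) (hx0 : 0 ≤ x 0) (hy0 : 0 < y 0) :
    ∀ t ∈ Ici (0 : ℝ), 0 < y t := by
  by_contra! hneg
  obtain ⟨T, hT0, hyT⟩ := hneg
  have hZ : IsCompact (Icc 0 T ∩ y ⁻¹' Iic 0) :=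
    isCompact_Icc.of_isClosed_subset ((h.continuousOn_y.mono Icc_subset_Ici_self)
      |>.preimage_isClosed_of_isClosed isClosed_Icc isClosed_Iic) inter_subset_left
  obtain ⟨t₀, ⟨⟨ht₀, ht₀T⟩, (hyt₀ : y t₀ ≤ 0)⟩, hleast⟩ :=
    hZ.exists_isLeast ⟨T, ⟨hT0, le_rfl⟩, hyT⟩
  have hy_pos : ∀ t ∈ Ioo 0 t₀, 0 < y t := fun t ht ↦
    not_le.1 fun hyt ↦ ht.2.not_ge (hleast ⟨⟨ht.1.le, ht.2.le.trans ht₀T⟩, hyt⟩)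
  have hx_mono : MonotoneOn x (Icc 0 t₀) := by
    refine monotoneOn_of_hasDerivWithinAt_nonneg (convex_Icc 0 t₀)
      (h.continuousOn_x.mono Icc_subset_Ici_self) (f' := x') (fun t ht ↦ ?_) (fun t ht ↦ ?_) <;>
      rw [interior_Icc] at ht
    · exact (h.hasDerivAt_x t ht.1).hasDerivWithinAt
    · exact (mul_pos hc (hy_pos t ht)).le.trans (h.mul_le_deriv_x t ht.1)
  have hy_mono : MonotoneOn y (Icc 0 t₀) := by
    refine monotoneOn_of_hasDerivWithinAt_nonneg (convex_Icc 0 t₀)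
      (h.continuousOn_y.mono Icc_subset_Ici_self) (f' := y') (fun t ht ↦ ?_) (fun t ht ↦ ?_) <;>
      rw [interior_Icc] at ht
    · exact (h.hasDerivAt_y t ht.1).hasDerivWithinAt
    · have hxt : 0 ≤ x t :=
        hx0.trans (hx_mono ⟨le_rfl, ht₀⟩ (Ioo_subset_Icc_self ht) ht.1.le)
      exact (mul_nonneg (mul_nonneg hc.le hxt) (hy_pos t ht).le).trans (h.mul_le_deriv_y t ht.1)
  linarith [hy_mono ⟨le_rfl, ht₀⟩ ⟨ht₀, le_rfl⟩ ht₀]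

lemma strictMonoOn_x (h : IsSupersolution c x y x' y') (hc : 0 < c)
    (hy : ∀ t ∈ Ici (0 : ℝ), 0 < y t) : StrictMonoOn x (Ici 0) := by
  refine strictMonoOn_of_hasDerivWithinAt_pos (convex_Ici 0) h.continuousOn_x (f' := x')
    (fun t ht ↦ ?_) (fun t ht ↦ ?_) <;> rw [interior_Ici] at ht
  · exact (h.hasDerivAt_x t ht).hasDerivWithinAt
  · exact (mul_pos hc (hy t (Ioi_subset_Ici_self ht))).trans_le (h.mul_le_deriv_x t ht)

end IsSupersolution

theorem not_isSupersolution {c : ℝ} {x y x' y' : ℝ → ℝ} (hc : 0 < c) (hx0 : 0 ≤ x 0)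
    (hy0 : 0 < y 0) : ¬ IsSupersolution c x y x' y' := by
  intro h
  have hy := h.pos_y hc hx0 hy0
  have hx_pos : ∀ t ∈ Ioi (0 : ℝ), 0 < x t := fun t ht ↦
    hx0.trans_lt (h.strictMonoOn_x hc hy self_mem_Ici (Ioi_subset_Ici_self ht) ht)
  have hIoi : Ioi (1 : ℝ) ⊆ Ioi 0 := Ioi_subset_Ioi zero_le_one
  have hIci : Ici (1 : ℝ) ⊆ Ioi 0 := Ici_subset_Ioi.2 one_pos
  refine false_of_mul_rpow_le_deriv (W := fun t ↦ x t * y t) (a := 1) (p := 4 / 3) hc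
    (by norm_num) ((h.continuousOn_x.mul h.continuousOn_y).mono (hIci.trans Ioi_subset_Ici_self))
    (fun t ht ↦ (h.hasDerivAt_x t (hIoi ht)).mul (h.hasDerivAt_y t (hIoi ht)))
    (fun t ht ↦ mul_pos (hx_pos t (hIci ht)) (hy t (Ioi_subset_Ici_self (hIci ht)))) fun t ht ↦ ?_
  have hxt := (hx_pos t (hIoi ht)).le
  have hyt := (hy t (Ioi_subset_Ici_self (hIoi ht))).le
  calc c * (x t * y t) ^ (4 / 3 : ℝ) ≤ c * (y t ^ 2 + x t ^ 2 * y t) := by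
        gcongr; exact mul_rpow_four_thirds_le hxt hyt
    _ ≤ x' t * y t + x t * y' t := by
        nlinarith [mul_le_mul_of_nonneg_right (h.mul_le_deriv_x t (hIoi ht)) hyt,
          mul_le_mul_of_nonneg_left (h.mul_le_deriv_y t (hIoi ht)) hxt]

/-- the differential-inequality blow-up mechanism.  For any `c > 0`
there are no continuously differentiable functions `x, y` on `[0,∞)` with `x(0) ≥ 0`,
`y(0) > 0` satisfying `x' ≥ c·y` and `y' ≥ c·x·y` for all `t ≥ 0`. -/
theorem stmt_13 (c : ℝ) (hc : 0 < c) :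
    ¬ ∃ x y : ℝ → ℝ,
      ContDiffOn ℝ 1 x (Ici 0) ∧ ContDiffOn ℝ 1 y (Ici 0) ∧
      0 ≤ x 0 ∧ 0 < y 0 ∧
      (∀ t ∈ Ici (0:ℝ), c * y t ≤ derivWithin x (Ici (0:ℝ)) t) ∧
      (∀ t ∈ Ici (0:ℝ), c * x t * y t ≤ derivWithin y (Ici (0:ℝ)) t) := by
  rintro ⟨x, y, hx, hy, hx0, hy0, hx', hy'⟩
  have hderiv {f : ℝ → ℝ} (hf : ContDiffOn ℝ 1 f (Ici 0)) (t : ℝ) (ht : t ∈ Ioi 0) :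
      HasDerivAt f (derivWithin f (Ici 0) t) t :=
    hf.hasDerivAt_derivWithin one_ne_zero (Ici_mem_nhds ht)
  exact not_isSupersolution hc hx0 hy0
    { continuousOn_x := hx.continuousOn
      continuousOn_y := hy.continuousOn
      hasDerivAt_x := hderiv hx
      hasDerivAt_y := hderiv hy
      mul_le_deriv_x := fun t ht ↦ hx' t (Ioi_subset_Ici_self ht)
      mul_le_deriv_y := fun t ht ↦ hy' t (Ioi_subset_Ici_self ht) }
end
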